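/- arXiv:1710.03052 — 3 statements merged into one kernel-verified Lean document; each statement's English description precedes it below -/
import Mathlib

section
/- Let X be a compact topological space whose topology is generated by each of two metrics ρ and ρ', and let 𝒰 be an open cover of X. If for each U ∈ 𝒰 there is a constant C(U) > 0 such that ρ'(x,y) ≤ C(U)·ρ(x,y) for all x, y ∈ U, then there exists a single constant C > 0 such that ρ'(x,y) ≤ C·ρ(x,y) for all x, y ∈ X. -/
/-- `d` is a metric (distance function) on `X`. -/
def IsMetricFun {X : Type*} (d : X → X → ℝ) : Prop :=
  (∀ x y, d x y = d y x) ∧ (∀ x y, d x y = 0 ↔ x = y) ∧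
    (∀ x y z, d x z ≤ d x y + d y z)

/-- The distance function `d` generates the given topology on `X`. -/
def GeneratesTopology {X : Type*} [TopologicalSpace X] (d : X → X → ℝ) : Prop :=
  ∀ s : Set X, IsOpen s ↔ ∀ x ∈ s, ∃ ε > 0, {y | d x y < ε} ⊆ s

/-- If `X` is compact, its topology is generated by each of the metrics `ρ` and `ρ'`,
`𝒰` is an open cover of `X`, and on each `U ∈ 𝒰` one has `ρ'(x,y) ≤ C(U)·ρ(x,y)`,
then there is a single constant `C > 0` with `ρ'(x,y) ≤ C·ρ(x,y)` for all `x, y ∈ X`. -/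
theorem locally_stronger_implies_stronger {X : Type*} [TopologicalSpace X] [CompactSpace X]
    (ρ ρ' : X → X → ℝ) (hρ : IsMetricFun ρ) (hρ' : IsMetricFun ρ')
    (hgen : GeneratesTopology ρ) (hgen' : GeneratesTopology ρ')
    (𝒰 : Set (Set X)) (hopen : ∀ U ∈ 𝒰, IsOpen U) (hcover : ⋃₀ 𝒰 = Set.univ)
    (hloc : ∀ U ∈ 𝒰, ∃ C > 0, ∀ x ∈ U, ∀ y ∈ U, ρ' x y ≤ C * ρ x y) :
    ∃ C > 0, ∀ x y : X, ρ' x y ≤ C * ρ x y := by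
  rcases isEmpty_or_nonempty X with hX | hX
  · exact ⟨1, one_pos, fun x => (hX.false x).elim⟩
  obtain ⟨hcomm, hzero, htri⟩ := hρ
  obtain ⟨hcomm', hzero', htri'⟩ := hρ'
  have hnonneg : ∀ x y, 0 ≤ ρ x y := by
    intro x y
    nlinarith [htri x y x, (hzero x x).2 rfl, hcomm x y]
  -- Step 1: finite subcover
  obtain ⟨F, hFsub, hFfin, hFcov⟩ : ∃ F ⊆ 𝒰, F.Finite ∧ Set.univ ⊆ ⋃₀ F := by
    obtain ⟨t, ht⟩ := (isCompact_univ (X := X)).elim_finite_subcover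
      (fun U : 𝒰 => (U : Set X)) (fun U => hopen U U.2)
      (by rw [← Set.sUnion_eq_iUnion, hcover])
    refine ⟨(fun U : 𝒰 => (U : Set X)) '' t, ?_, (t.finite_toSet.image _), ?_⟩
    · rintro V ⟨U, _, rfl⟩; exact U.2
    · intro x hx
      obtain ⟨U, ⟨hU1, hU2⟩, hxU⟩ := by simpa using ht hx
      exact ⟨U, ⟨⟨U, hU1⟩, hU2, rfl⟩, hxU⟩
  -- Step 2: Lebesgue number for F with respect to ρ
  obtain ⟨δ, hδ, hleb⟩ : ∃ δ > 0, ∀ x : X, ∃ U ∈ F, ∀ y, ρ x y < δ → y ∈ U := by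
    letI m : MetricSpace X := MetricSpace.ofDistTopology ρ (fun x => (hzero x x).2 rfl)
      hcomm htri (fun s => (hgen s).trans (by
        exact forall₂_congr fun x _ => exists_congr fun ε => and_congr_right fun _ =>
          ⟨fun h y hy => h hy, fun h y hy => h y hy⟩))
      (fun x y h => (hzero x y).1 h)
    obtain ⟨δ, hδ, h⟩ := lebesgue_number_lemma_of_metric_sUnion (isCompact_univ (X := X))
      (fun U hU => hopen U (hFsub hU)) hFcov
    refine ⟨δ, hδ, fun x => ?_⟩
    obtain ⟨U, hU, hball⟩ := h x (Set.mem_univ x)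
    exact ⟨U, hU, fun y hy => hball (by
      change dist y x < δ
      rw [show dist y x = ρ y x from rfl, hcomm]
      exact hy)⟩
  -- Step 3: max constant over F
  choose! Cf hCfpos hCf using hloc
  obtain ⟨C₀, hC₀⟩ : ∃ C₀, ∀ z ∈ Cf '' F, z ≤ C₀ := (hFfin.image Cf).bddAbove
  -- Step 4: global bound on ρ'
  obtain ⟨M, hM⟩ : ∃ M, ∀ x y : X, ρ' x y ≤ M := by
    letI m' : MetricSpace X := MetricSpace.ofDistTopology ρ' (fun x => (hzero' x x).2 rfl)
      hcomm' htri' (fun s => (hgen' s).trans (by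
        exact forall₂_congr fun x _ => exists_congr fun ε => and_congr_right fun _ =>
          ⟨fun h y hy => h hy, fun h y hy => h y hy⟩))
      (fun x y h => (hzero' x y).1 h)
    obtain ⟨M, hM⟩ := Metric.isBounded_iff.1 (isCompact_univ (X := X)).isBounded
    exact ⟨M, fun x y => hM (Set.mem_univ x) (Set.mem_univ y)⟩
  have hM0 : 0 ≤ M := le_trans (le_of_eq ((hzero' hX.some hX.some).2 rfl).symm) (hM _ _)
  refine ⟨max C₀ (M / δ) + 1, by positivity, fun x y => ?_⟩
  rcases lt_or_ge (ρ x y) δ with h | h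
  · obtain ⟨U, hUF, hU⟩ := hleb x
    have hxU : x ∈ U := hU x (by rw [(hzero x x).2 rfl]; exact hδ)
    have hyU : y ∈ U := hU y h
    calc ρ' x y ≤ Cf U * ρ x y := hCf U (hFsub hUF) x hxU y hyU
    _ ≤ (max C₀ (M / δ) + 1) * ρ x y := by
        apply mul_le_mul_of_nonneg_right _ (hnonneg x y)
        have := hC₀ (Cf U) ⟨U, hUF, rfl⟩
        calc Cf U ≤ C₀ := this
        _ ≤ max C₀ (M / δ) + 1 := by linarith [le_max_left C₀ (M/δ)]
  · calc ρ' x y ≤ M := hM x y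
    _ = (M / δ) * δ := by field_simp
    _ ≤ (max C₀ (M / δ) + 1) * ρ x y := by
        apply mul_le_mul (by linarith [le_max_right C₀ (M/δ)]) h (le_of_lt hδ)
        positivity
end

section
/- If u : ℝ → E is uniformly almost periodic and χ : E → F is bi-Lipschitz (both χ and its inverse are Lipschitz), then 𝔇𝔦(χ ∘ u) = 𝔇𝔦(u). -/
/-- `τ` is an `ε`-almost period of `u`. -/
def IsAlmostPeriod {E : Type*} [NormedAddCommGroup E] (u : ℝ → E) (ε τ : ℝ) : Prop :=
  ∀ t : ℝ, ‖u (t + τ) - u t‖ ≤ ε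

/-- `L` is an inclusion length for `ε`-almost periods of `u`. -/
def IsInclusionLength {E : Type*} [NormedAddCommGroup E] (u : ℝ → E) (ε L : ℝ) : Prop :=
  0 < L ∧ ∀ a : ℝ, ∃ τ ∈ Set.Icc a (a + L), IsAlmostPeriod u ε τ

/-- The minimal inclusion length `l_u(ε)` for `ε`-almost periods of `u`. -/
noncomputable def inclusionLength {E : Type*} [NormedAddCommGroup E] (u : ℝ → E) (ε : ℝ) : ℝ :=
  sInf {L | IsInclusionLength u ε L}

/-- `u` is uniformly almost periodic. -/
def AlmostPeriodic {E : Type*} [NormedAddCommGroup E] (u : ℝ → E) : Prop :=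
  Continuous u ∧ ∀ ε > 0, ∃ L, IsInclusionLength u ε L

/-- The Diophantine dimension `𝔇𝔦(u) = limsup_{ε→0+} ln l_u(ε)/ln(1/ε)`. -/
noncomputable def diophDim {E : Type*} [NormedAddCommGroup E] (u : ℝ → E) : ℝ :=
  Filter.limsup (fun ε : ℝ => Real.log (inclusionLength u ε) / Real.log (1 / ε)) (nhdsWithin 0 (Set.Ioi 0))

/-- The lower Diophantine dimension `𝔡𝔦(u) = liminf_{ε→0+} ln l_u(ε)/ln(1/ε)`. -/
noncomputable def lowerDiophDim {E : Type*} [NormedAddCommGroup E] (u : ℝ → E) : ℝ :=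
  Filter.liminf (fun ε : ℝ => Real.log (inclusionLength u ε) / Real.log (1 / ε)) (nhdsWithin 0 (Set.Ioi 0))
/-! A map that is `K₁`-Lipschitz with `K₂`-Lipschitz inverse turns `ε/K₁`-almost periods of `u`
into `ε`-almost periods of `χ ∘ u`, and `ε/K₂`-almost periods of `χ ∘ u` into `ε`-almost periods
of `u`; hence `l_{χ∘u}(ε) ≤ l_u(ε/K₁)` and `l_u(ε) ≤ l_{χ∘u}(ε/K₂)`. Rescaling `ε` by a constant
shifts `ln(1/ε)` by a constant, which disappears in the `limsup` of `ln l(ε) / ln(1/ε)`. -/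

open Filter Set Topology

namespace Real

theorem sInf_le_sInf_of_forall_lt_mem {S T : Set ℝ} (hS : S.Nonempty) (hT : BddBelow T)
    (hST : ∀ a ∈ S, ∀ b, a < b → b ∈ T) : sInf T ≤ sInf S :=
  le_csInf hS fun a ha => le_of_forall_gt_imp_ge_of_dense fun b hab => csInf_le hT (hST a ha b hab)

theorem sInf_eq_sInf_of_forall_lt_mem {S T : Set ℝ} (hST : ∀ a ∈ S, ∀ b, a < b → b ∈ T)
    (hTS : ∀ b ∈ T, ∀ a, b < a → a ∈ S) : sInf T = sInf S := by
  have nonempty {S T : Set ℝ} (hST : ∀ a ∈ S, ∀ b, a < b → b ∈ T) (hS : S.Nonempty) :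
      T.Nonempty :=
    let ⟨a, ha⟩ := hS; ⟨a + 1, hST a ha _ (lt_add_one a)⟩
  have bddBelow {S T : Set ℝ} (hST : ∀ a ∈ S, ∀ b, a < b → b ∈ T) (hT : BddBelow T) :
      BddBelow S :=
    let ⟨m, hm⟩ := hT; ⟨m - 1, fun a ha => by linarith [hm (hST a ha _ (lt_add_one a))]⟩
  rcases S.eq_empty_or_nonempty with rfl | hS
  · rw [Set.not_nonempty_iff_eq_empty.1 fun hT => (nonempty hTS hT).ne_empty rfl]
  by_cases hSb : BddBelow S
  · have hTb : BddBelow T := bddBelow hTS hSb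
    exact le_antisymm (sInf_le_sInf_of_forall_lt_mem hS hTb hST)
      (sInf_le_sInf_of_forall_lt_mem (nonempty hST hS) hSb hTS)
  · rw [sInf_of_not_bddBelow hSb, sInf_of_not_bddBelow (mt (bddBelow hST) hSb)]

end Real

theorem Filter.limsup_eq_limsup_of_forall_lt {α : Type*} {l : Filter α} {f g : α → ℝ}
    (hfg : ∀ a b, a < b → (∀ᶠ x in l, f x ≤ a) → ∀ᶠ x in l, g x ≤ b)
    (hgf : ∀ a b, a < b → (∀ᶠ x in l, g x ≤ a) → ∀ᶠ x in l, f x ≤ b) :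
    limsup g l = limsup f l := by
  rw [limsup_eq, limsup_eq]
  exact Real.sInf_eq_sInf_of_forall_lt_mem (fun a ha b hab => hfg a b hab ha)
    fun a ha b hab => hgf a b hab ha

theorem Real.tendsto_log_one_div_nhdsGT_zero :
    Tendsto (fun ε : ℝ => Real.log (1 / ε)) (𝓝[>] 0) atTop := by
  simp only [one_div]
  exact Real.tendsto_log_atTop.comp tendsto_inv_nhdsGT_zero

theorem tendsto_div_const_nhdsGT_zero {K : ℝ} (hK : 0 < K) :
    Tendsto (fun ε : ℝ => ε / K) (𝓝[>] 0) (𝓝[>] 0) :=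
  tendsto_nhdsWithin_iff.2
    ⟨by simpa using ((continuous_id.div_const K).tendsto (0 : ℝ)).mono_left nhdsWithin_le_nhds,
      eventually_mem_nhdsWithin.mono fun _ hε => div_pos hε hK⟩

noncomputable def logRatio (f : ℝ → ℝ) (ε : ℝ) : ℝ :=
  Real.log (f ε) / Real.log (1 / ε)

theorem eventually_logRatio_le_iff {f : ℝ → ℝ} {a : ℝ} :
    (∀ᶠ ε in 𝓝[>] 0, logRatio f ε ≤ a) ↔
      ∀ᶠ ε in 𝓝[>] 0, Real.log (f ε) ≤ a * Real.log (1 / ε) := by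
  refine eventually_congr ?_
  filter_upwards [Real.tendsto_log_one_div_nhdsGT_zero.eventually_gt_atTop 0] with ε hε
  exact div_le_iff₀ hε

theorem nonneg_of_eventually_logRatio_le {f : ℝ → ℝ} {a : ℝ} (hf : AntitoneOn f (Ioi 0))
    (hf0 : ∀ ε, 0 ≤ f ε) (ha : ∀ᶠ ε in 𝓝[>] 0, logRatio f ε ≤ a) : 0 ≤ a := by
  by_cases hpos : ∃ ε₀ > 0, 0 < f ε₀
  · obtain ⟨ε₀, hε₀, hfε₀⟩ := hpos
    have hlim : Tendsto (fun ε => Real.log (f ε₀) / Real.log (1 / ε)) (𝓝[>] 0) (𝓝 0) :=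
      tendsto_const_nhds.div_atTop Real.tendsto_log_one_div_nhdsGT_zero
    refine le_of_tendsto hlim ?_
    filter_upwards [ha, Ioo_mem_nhdsGT hε₀,
      Real.tendsto_log_one_div_nhdsGT_zero.eventually_gt_atTop 0] with ε hεa hε hlog
    exact le_trans (div_le_div_of_nonneg_right
      (Real.log_le_log hfε₀ (hf hε.1 hε₀ hε.2.le)) hlog.le) hεa
  · push Not at hpos
    obtain ⟨ε, hεa, hε⟩ := (ha.and eventually_mem_nhdsWithin).exists
    have hfε : f ε = 0 := le_antisymm (hpos ε hε) (hf0 ε)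
    simpa [logRatio, hfε] using hεa

theorem eventually_logRatio_le_of_le_comp_div {f g : ℝ → ℝ} {K a b : ℝ} (hK : 0 < K)
    (hg0 : ∀ ε, 0 ≤ g ε) (hgf : ∀ ε > 0, g ε ≤ f (ε / K)) (ha : 0 ≤ a) (hab : a < b)
    (hf : ∀ᶠ ε in 𝓝[>] 0, logRatio f ε ≤ a) : ∀ᶠ ε in 𝓝[>] 0, logRatio g ε ≤ b := by
  have hlog := Real.tendsto_log_one_div_nhdsGT_zero
  rw [eventually_logRatio_le_iff] at hf ⊢
  filter_upwards [(tendsto_div_const_nhdsGT_zero hK).eventually hf, eventually_mem_nhdsWithin,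
    hlog.eventually_ge_atTop 0, hlog.eventually_ge_atTop (a * Real.log K / (b - a))]
    with ε hfε (hε : 0 < ε) hlog₀ hlogK
  have hKε : Real.log (1 / (ε / K)) = Real.log (1 / ε) + Real.log K := by
    rw [one_div_div, div_eq_mul_one_div, Real.log_mul hK.ne' (by positivity), add_comm]
  have hlogK' : a * Real.log K ≤ (b - a) * Real.log (1 / ε) := by
    rwa [div_le_iff₀' (sub_pos.2 hab)] at hlogK
  rcases (hg0 ε).eq_or_lt with hgε | hgε
  · -- the junk value `log 0 = 0` is why `0 ≤ a` is assumed
    rw [← hgε, Real.log_zero]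
    exact mul_nonneg (ha.trans hab.le) hlog₀
  · calc Real.log (g ε) ≤ Real.log (f (ε / K)) := Real.log_le_log hgε (hgf ε hε)
      _ ≤ a * (Real.log (1 / ε) + Real.log K) := hKε ▸ hfε
      _ ≤ b * Real.log (1 / ε) := by linarith

section InclusionLength

variable {E F : Type*} [NormedAddCommGroup E] [NormedAddCommGroup F]

theorem inclusionLength_nonneg (u : ℝ → E) (ε : ℝ) : 0 ≤ inclusionLength u ε :=
  Real.sInf_nonneg fun _ hL => hL.1.le

theorem IsInclusionLength.of_norm_sub_le {u : ℝ → E} {v : ℝ → F} {K ε L : ℝ} (hK : 0 < K)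
    (hvu : ∀ s t, ‖v s - v t‖ ≤ K * ‖u s - u t‖) (hL : IsInclusionLength u (ε / K) L) :
    IsInclusionLength v ε L := by
  refine ⟨hL.1, fun a => ?_⟩
  obtain ⟨τ, hτ, hap⟩ := hL.2 a
  refine ⟨τ, hτ, fun t => ?_⟩
  calc ‖v (t + τ) - v t‖ ≤ K * ‖u (t + τ) - u t‖ := hvu _ _
    _ ≤ K * (ε / K) := by gcongr; exact hap t
    _ = ε := mul_div_cancel₀ ε hK.ne'

theorem inclusionLength_le_of_forall {u : ℝ → E} {v : ℝ → F} {ε δ : ℝ}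
    (hu : ∃ L, IsInclusionLength u δ L)
    (huv : ∀ L, IsInclusionLength u δ L → IsInclusionLength v ε L) :
    inclusionLength v ε ≤ inclusionLength u δ :=
  csInf_le_csInf ⟨0, fun _ hL => hL.1.le⟩ hu huv

theorem inclusionLength_antitoneOn {u : ℝ → E} (hu : ∀ ε > 0, ∃ L, IsInclusionLength u ε L) :
    AntitoneOn (inclusionLength u) (Ioi 0) := fun _ hδ _ _ hδε =>
  inclusionLength_le_of_forall (hu _ hδ) fun _ hL =>
    ⟨hL.1, fun a => (hL.2 a).imp fun _ ⟨hτ, hap⟩ => ⟨hτ, fun t => (hap t).trans hδε⟩⟩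

theorem eventually_logRatio_inclusionLength_le {u : ℝ → E} {v : ℝ → F} {K a b : ℝ}
    (hu : ∀ ε > 0, ∃ L, IsInclusionLength u ε L) (hK : 0 < K)
    (hvu : ∀ s t, ‖v s - v t‖ ≤ K * ‖u s - u t‖) (hab : a < b)
    (ha : ∀ᶠ ε in 𝓝[>] 0, logRatio (inclusionLength u) ε ≤ a) :
    ∀ᶠ ε in 𝓝[>] 0, logRatio (inclusionLength v) ε ≤ b :=
  eventually_logRatio_le_of_le_comp_div hK (inclusionLength_nonneg v)
    (fun _ hε => inclusionLength_le_of_forall (hu _ (div_pos hε hK))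
      fun _ => IsInclusionLength.of_norm_sub_le hK hvu)
    (nonneg_of_eventually_logRatio_le (inclusionLength_antitoneOn hu)
      (inclusionLength_nonneg u) ha) hab ha

end InclusionLength

theorem diophDim_biLipschitz_comp_general {E F : Type*} [NormedAddCommGroup E] [NormedAddCommGroup F]
    (u : ℝ → E) (hu : AlmostPeriodic u) (χ : E → F)
    (K₁ K₂ : ℝ) (hK₁ : 0 < K₁) (hK₂ : 0 < K₂)
    (hlip : ∀ x y : E, ‖χ x - χ y‖ ≤ K₁ * ‖x - y‖)
    (hlip' : ∀ x y : E, ‖x - y‖ ≤ K₂ * ‖χ x - χ y‖) :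
    diophDim (χ ∘ u) = diophDim u := by
  have hχu : ∀ s t, ‖(χ ∘ u) s - (χ ∘ u) t‖ ≤ K₁ * ‖u s - u t‖ := fun s t => hlip (u s) (u t)
  have huχ : ∀ s t, ‖u s - u t‖ ≤ K₂ * ‖(χ ∘ u) s - (χ ∘ u) t‖ := fun s t => hlip' (u s) (u t)
  have hχu_incl : ∀ ε > 0, ∃ L, IsInclusionLength (χ ∘ u) ε L := fun ε hε =>
    (hu.2 (ε / K₁) (div_pos hε hK₁)).imp fun _ => IsInclusionLength.of_norm_sub_le hK₁ hχu
  exact limsup_eq_limsup_of_forall_lt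
    (fun _ _ hab => eventually_logRatio_inclusionLength_le hu.2 hK₁ hχu hab)
    (fun _ _ hab => eventually_logRatio_inclusionLength_le hχu_incl hK₂ huχ hab)

/-- If `u` is almost periodic and `χ` is bi-Lipschitz, then `𝔇𝔦(χ ∘ u) = 𝔇𝔦(u)`. -/
theorem diophDim_biLipschitz_comp {E F : Type*} [NormedAddCommGroup E] [NormedAddCommGroup F]
    (u : ℝ → E) (hu : AlmostPeriodic u) (χ : E → F) (hbij : Function.Bijective χ)
    (K₁ K₂ : ℝ) (hK₁ : 0 < K₁) (hK₂ : 0 < K₂)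
    (hlip : ∀ x y : E, ‖χ x - χ y‖ ≤ K₁ * ‖x - y‖)
    (hlip' : ∀ x y : E, ‖x - y‖ ≤ K₂ * ‖χ x - χ y‖) :
    diophDim (χ ∘ u) = diophDim u :=
  diophDim_biLipschitz_comp_general u hu χ K₁ K₂ hK₁ hK₂ hlip hlip'
end

section
/- Let u(t) = h(ω₁t, …, ω_n t) be an E-quasiperiodic function with h : 𝕋ⁿ → E continuous and 1-periodic in each variable, and suppose the exponents 2πω₁, …, 2πω_n are Fourier exponents of u (i.e. the corresponding Fourier coefficients are nonzero). Then h is strictly 1-periodic: if h(θ + θ') = h(θ) for all θ ∈ 𝕋ⁿ, then θ' = 0 in 𝕋ⁿ. -/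
/-!
Lift `h` to a continuous function `H` on the torus `𝕋ⁿ = ℝⁿ/ℤⁿ`, so that `u(t) = H(tω)`.
Since the `ω_j` are rationally independent, the line `t ↦ tω` is equidistributed in `𝕋ⁿ`
(Weyl): time averages of `F(tω)` converge to `∫ F` for every continuous `F`, first for characters
by direct computation, then for all `F` by density of trigonometric polynomials. Hence the Fourier
coefficient `U_j ≠ 0` of `u` at `2πω_j` is `∫ e^{-2πi x_j} H(x) dx` (after applying a functional
`ℓ` with `ℓ U_j ≠ 0`). Translating the integration variable by `θ'`, which leaves `H` invariant,
multiplies this integral by `e^{-2πi θ'_j}`, so `e^{2πi θ'_j} = 1`, i.e. `θ'_j ∈ ℤ`.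
-/

open MeasureTheory Filter Topology UnitAddTorus Complex
open scoped Real

instance : IsProbabilityMeasure (volume : Measure UnitAddCircle) :=
  ⟨by simp [AddCircle.measure_univ]⟩

lemma fourier_apply_add {T : ℝ} (n : ℤ) (x y : AddCircle T) :
    fourier n (x + y) = fourier n x * fourier n y := by
  simp only [fourier_apply, smul_add, AddCircle.toCircle_add, Circle.coe_mul]

lemma integral_fourier_eq_zero {n : ℤ} (hn : n ≠ 0) : ∫ x : UnitAddCircle, fourier n x = 0 :=
  integral_eq_zero_of_add_right_eq_neg (fourier_add_half_inv_index hn one_pos)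

lemma exists_int_eq_of_fourier_one_eq_one {x : ℝ} (hx : fourier 1 (x : UnitAddCircle) = 1) :
    ∃ m : ℤ, x = m := by
  rw [fourier_one, ← Circle.coe_one, Circle.coe_inj, ← AddCircle.toCircle_zero] at hx
  obtain ⟨m, hm⟩ :=
    (AddCircle.coe_eq_zero_iff (1 : ℝ)).1 (AddCircle.injective_toCircle one_ne_zero hx)
  exact ⟨m, by simpa using hm.symm⟩

section ContinuousMap

variable {X E : Type*} [TopologicalSpace X] [CompactSpace X] [MeasurableSpace X]
  [OpensMeasurableSpace X] [NormedAddCommGroup E]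

lemma ContinuousMap.integrable (μ : Measure X) [IsFiniteMeasure μ] (f : C(X, E)) :
    Integrable f μ :=
  f.continuous.integrable_of_hasCompactSupport (HasCompactSupport.of_compactSpace f)

lemma lipschitzWith_one_integral_continuousMap [NormedSpace ℝ E] (μ : Measure X)
    [IsProbabilityMeasure μ] : LipschitzWith 1 (fun f : C(X, E) => ∫ x, f x ∂μ) := by
  refine LipschitzWith.of_dist_le_mul fun f g => ?_
  rw [dist_eq_norm, dist_eq_norm, ← integral_sub (f.integrable μ) (g.integrable μ)]
  simpa using norm_integral_le_of_norm_le_const (μ := μ)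
    (Eventually.of_forall fun x => (f - g).norm_coe_le_norm x)

end ContinuousMap

lemma ContinuousLinearMap.tendsto_average_comp {E F : Type*} [NormedAddCommGroup E]
    [NormedSpace ℂ E] [CompleteSpace E] [NormedAddCommGroup F] [NormedSpace ℂ F]
    [CompleteSpace F] (ℓ : E →L[ℂ] F) {v : ℝ → E} (hv : Continuous v) {U : E}
    (h : Tendsto (fun T : ℝ => (1 / T) • ∫ t in (0 : ℝ)..T, v t) atTop (𝓝 U)) :
    Tendsto (fun T : ℝ => (1 / T) • ∫ t in (0 : ℝ)..T, ℓ (v t)) atTop (𝓝 (ℓ U)) := by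
  refine ((ℓ.continuous.tendsto U).comp h).congr fun T => ?_
  rw [Function.comp_apply, ℓ.map_smul_of_tower, ← ℓ.intervalIntegral_comp_comm
    (hv.intervalIntegrable 0 T)]

lemma tendsto_average_exp_mul_I {c : ℝ} (hc : c ≠ 0) :
    Tendsto (fun T : ℝ => (1 / T : ℝ) • ∫ t in (0 : ℝ)..T, exp (c * t * I)) atTop (𝓝 0) := by
  have hcI : (c * I : ℂ) ≠ 0 := mul_ne_zero (ofReal_ne_zero.2 hc) I_ne_zero
  have hintegral (T : ℝ) :
      ∫ t in (0 : ℝ)..T, exp (c * t * I) = (exp (c * I * T) - 1) / (c * I) := by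
    simp_rw [mul_right_comm _ _ I]
    simp [integral_exp_mul_complex hcI]
  have hbdd (T : ℝ) : ‖(exp (c * I * T) - 1) / (c * I)‖ ≤ 2 / ‖(c * I : ℂ)‖ := by
    rw [norm_div]
    gcongr
    calc ‖exp (c * I * T) - 1‖ ≤ ‖exp ((c * T : ℝ) * I)‖ + ‖(1 : ℂ)‖ := by
          push_cast; rw [mul_right_comm]; exact norm_sub_le _ _
      _ = 2 := by rw [norm_exp_ofReal_mul_I]; norm_num
  simp_rw [hintegral, one_div]
  exact tendsto_inv_atTop_zero.zero_smul_isBoundedUnder_le (isBoundedUnder_of ⟨_, hbdd⟩)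

namespace UnitAddTorus

variable {d : Type*}

lemma exists_continuousMap_comp_coe_eq {X : Type*} [TopologicalSpace X]
    {h : (d → ℝ) → X} (hcont : Continuous h)
    (hper : ∀ (θ : d → ℝ) (m : d → ℤ), h (θ + fun j => (m j : ℝ)) = h θ) :
    ∃ H : C(UnitAddTorus d, X), ∀ θ : d → ℝ, H (fun i => θ i) = h θ := by
  let q : C(d → ℝ, UnitAddTorus d) := ⟨fun θ i => θ i, by fun_prop⟩
  have hq : IsQuotientMap q :=
    (IsOpenMap.piMap (fun _ => QuotientAddGroup.isOpenMap_coe)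
      (.of_forall fun _ => QuotientAddGroup.mk_surjective)).isQuotientMap q.continuous
      (Function.Surjective.piMap fun _ => QuotientAddGroup.mk_surjective)
  have hfib : Function.FactorsThrough h q := fun a b hab => by
    have hdiff (i : d) : ∃ m : ℤ, b i = a i + m := by
      obtain ⟨m, hm⟩ := (AddCircle.coe_eq_zero_iff (1 : ℝ)).1
        (by rw [AddCircle.coe_sub]; exact sub_eq_zero.2 (congrFun hab i).symm :
          ((b i - a i : ℝ) : UnitAddCircle) = 0)
      exact ⟨m, by simp at hm; linarith⟩
    choose m hm using hdiff
    rw [show b = a + fun i => (m i : ℝ) from funext hm, hper]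
  exact ⟨hq.lift ⟨h, hcont⟩ hfib, ContinuousMap.congr_fun (hq.lift_comp ⟨h, hcont⟩ hfib)⟩

lemma apply_coe_add_eq {X : Type*} {h : (d → ℝ) → X} {H : UnitAddTorus d → X}
    (hH : ∀ θ : d → ℝ, H (fun i => θ i) = h θ) {θ' : d → ℝ}
    (hθ' : ∀ θ : d → ℝ, h (θ + θ') = h θ) (x : UnitAddTorus d) :
    H ((fun i => (θ' i : UnitAddCircle)) + x) = H x := by
  obtain ⟨θ, rfl⟩ := Function.Surjective.piMap (fun _ => QuotientAddGroup.mk_surjective) x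
  calc H _ = h (θ + θ') := by rw [← hH, add_comm θ]; rfl
    _ = H _ := by rw [hθ', ← hH]; rfl

def line (ω : d → ℝ) (t : ℝ) : UnitAddTorus d := fun i => ((ω i * t : ℝ) : UnitAddCircle)

@[fun_prop]
lemma continuous_line (ω : d → ℝ) : Continuous (line ω) :=
  continuous_pi fun _ => (AddCircle.continuous_mk' 1).comp (continuous_const.mul continuous_id)

noncomputable def lineAverage (ω : d → ℝ) (T : ℝ) : C(UnitAddTorus d, ℂ) →ₗ[ℂ] ℂ where
  toFun f := (1 / T : ℝ) • ∫ t in (0 : ℝ)..T, f (line ω t)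
  map_add' f g := by
    have hintegrable (f : C(UnitAddTorus d, ℂ)) :
        IntervalIntegrable (fun t => f (line ω t)) volume 0 T :=
      (f.continuous.comp (continuous_line ω)).intervalIntegrable _ _
    simp only [ContinuousMap.add_apply]
    rw [← smul_add, ← intervalIntegral.integral_add (hintegrable f) (hintegrable g)]
  map_smul' c f := by
    simp only [ContinuousMap.coe_smul, Pi.smul_apply, intervalIntegral.integral_smul,
      RingHom.id_apply, smul_comm c]

lemma lineAverage_apply (ω : d → ℝ) (T : ℝ) (f : C(UnitAddTorus d, ℂ)) :
    lineAverage ω T f = (1 / T : ℝ) • ∫ t in (0 : ℝ)..T, f (line ω t) :=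
  rfl

lemma norm_lineAverage_le (ω : d → ℝ) (T : ℝ) (f : C(UnitAddTorus d, ℂ)) :
    ‖lineAverage ω T f‖ ≤ ‖f‖ := by
  rcases eq_or_ne T 0 with rfl | hT
  · simp [lineAverage_apply]
  calc ‖lineAverage ω T f‖ ≤ |1 / T| * (‖f‖ * |T - 0|) := by
        rw [lineAverage_apply, norm_smul, Real.norm_eq_abs]
        gcongr
        exact intervalIntegral.norm_integral_le_of_norm_le_const fun t _ => f.norm_coe_le_norm _
    _ = ‖f‖ := by rw [sub_zero, abs_div, abs_one]; field_simp [abs_ne_zero.2 hT]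

variable [Fintype d]

lemma mFourier_apply_add (n : d → ℤ) (x y : UnitAddTorus d) :
    mFourier n (x + y) = mFourier n x * mFourier n y := by
  simp only [mFourier, ContinuousMap.coe_mk, Pi.add_apply, fourier_apply_add,
    Finset.prod_mul_distrib]

lemma mFourier_line (ω : d → ℝ) (n : d → ℤ) (t : ℝ) :
    mFourier n (line ω t) = exp ((2 * π * ∑ i, n i * ω i : ℝ) * t * I) := by
  simp only [mFourier, line, ContinuousMap.coe_mk, fourier_coe_apply, ← exp_sum]
  push_cast
  rw [Finset.mul_sum, Finset.sum_mul, Finset.sum_mul]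
  exact congrArg exp (Finset.sum_congr rfl fun i _ => by ring)

lemma integral_mFourier {n : d → ℤ} (hn : n ≠ 0) : ∫ x, mFourier n x = 0 := by
  obtain ⟨i, hi⟩ := Function.ne_iff.1 hn
  simp only [mFourier, ContinuousMap.coe_mk]
  rw [integral_fintype_prod_volume_eq_prod (fun i x => (fourier (n i) x : ℂ))]
  exact Finset.prod_eq_zero (Finset.mem_univ i) (integral_fourier_eq_zero hi)

lemma mFourier_eq_one_of_integral_mul_ne_zero {g : UnitAddTorus d → ℂ} {p : UnitAddTorus d}
    (hg : ∀ x, g (p + x) = g x) {n : d → ℤ} (hn : ∫ x, mFourier n x * g x ≠ 0) :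
    mFourier n p = 1 := by
  refine (mul_eq_right₀ hn).1 ?_
  calc mFourier n p * ∫ x, mFourier n x * g x
      = ∫ x, mFourier n (p + x) * g (p + x) := by
        simp only [mFourier_apply_add, hg, mul_assoc, integral_const_mul]
    _ = ∫ x, mFourier n x * g x := integral_add_left_eq_self (fun x => mFourier n x * g x) p

lemma tendsto_lineAverage_mFourier {ω : d → ℝ}
    (hind : ∀ a : d → ℤ, (∑ i, (a i : ℝ) * ω i) = 0 → a = 0) (n : d → ℤ) :
    Tendsto (lineAverage ω · (mFourier n)) atTop (𝓝 (∫ x, mFourier n x)) := by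
  rcases eq_or_ne n 0 with rfl | hn
  · refine tendsto_const_nhds.congr' ?_
    filter_upwards [eventually_ne_atTop 0] with T hT
    simp [lineAverage_apply, mFourier_zero, hT]
  · have hc : 2 * π * ∑ i, (n i : ℝ) * ω i ≠ 0 :=
      mul_ne_zero (by positivity) fun h => hn (hind n h)
    rw [integral_mFourier hn]
    simpa [lineAverage_apply, mFourier_line] using tendsto_average_exp_mul_I hc

theorem tendsto_lineAverage {ω : d → ℝ}
    (hind : ∀ a : d → ℤ, (∑ i, (a i : ℝ) * ω i) = 0 → a = 0) (f : C(UnitAddTorus d, ℂ)) :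
    Tendsto (lineAverage ω · f) atTop (𝓝 (∫ x, f x)) := by
  let S : Submodule ℂ C(UnitAddTorus d, ℂ) :=
    { carrier := {f | Tendsto (lineAverage ω · f) atTop (𝓝 (∫ x, f x))}
      add_mem' := fun {f g} hf hg => by
        simpa [integral_add (f.integrable _) (g.integrable _)] using hf.add hg
      zero_mem' := by simp
      smul_mem' := fun c f hf => by simpa [integral_const_mul] using hf.const_smul c }
  have hclosed : IsClosed (S : Set C(UnitAddTorus d, ℂ)) :=
    (LipschitzWith.uniformEquicontinuous _ 1 fun T => LipschitzWith.of_dist_le_mul fun f g => by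
        simpa [dist_eq_norm, ← map_sub] using norm_lineAverage_le ω T (f - g)).equicontinuous
      |>.isClosed_setOfPred_tendsto (lipschitzWith_one_integral_continuousMap _).continuous
  have hdense : Dense (S : Set C(UnitAddTorus d, ℂ)) :=
    (Submodule.dense_iff_topologicalClosure_eq_top.2 span_mFourier_closure_eq_top).mono
      (Submodule.span_le.2 (Set.range_subset_iff.2 (tendsto_lineAverage_mFourier hind)))
  exact hclosed.closure_subset (hdense f)

lemma mFourier_neg_single_line [DecidableEq d] (ω : d → ℝ) (j : d) (t : ℝ) :
    mFourier (-Pi.single j 1) (line ω t) = exp (-(I * 2 * π * ω j * t)) := by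
  simp only [mFourier_line, Pi.neg_apply, Int.cast_neg, neg_mul, Finset.sum_neg_distrib,
    Pi.single_apply, Int.cast_ite, Int.cast_one, Int.cast_zero, ite_mul, one_mul, zero_mul,
    Finset.sum_ite_eq', Finset.mem_univ, if_true]
  push_cast
  ring_nf

lemma exists_int_eq_of_mFourier_neg_single_eq_one [DecidableEq d] {θ : d → ℝ} {j : d}
    (h : mFourier (-Pi.single j 1) (fun i => (θ i : UnitAddCircle)) = 1) :
    ∃ m : ℤ, θ j = m := by
  rw [mFourier_neg, map_eq_one_iff _ (RingHom.injective _), mFourier_single] at h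
  exact exists_int_eq_of_fourier_one_eq_one h

end UnitAddTorus

/-- If `u(t) = h(ω₁t,…,ω_nt)` with `h` continuous and `ℤⁿ`-periodic, the `ω_j` rationally
independent, and each exponent `2πω_j` is a Fourier exponent of `u` (the corresponding
Bohr–Fourier coefficient is nonzero), then `h` is strictly 1-periodic: any `θ'` with
`h(θ + θ') = h(θ)` for all `θ` has all coordinates integer (i.e. `θ' = 0` in `𝕋ⁿ`). -/
theorem strictly_periodic_of_fourier_exponents {E : Type*} [NormedAddCommGroup E]
    [NormedSpace ℂ E] [CompleteSpace E] {n : ℕ} (ω : Fin n → ℝ)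
    (hind : ∀ a : Fin n → ℤ, (∑ j, (a j : ℝ) * ω j) = 0 → a = 0)
    (h : (Fin n → ℝ) → E) (hcont : Continuous h)
    (hper : ∀ (θ : Fin n → ℝ) (m : Fin n → ℤ), h (θ + fun j => (m j : ℝ)) = h θ)
    (u : ℝ → E) (hu : ∀ t : ℝ, u t = h (fun j => ω j * t))
    (hfourier : ∀ j : Fin n, ∃ U : E, U ≠ 0 ∧
      Tendsto (fun T : ℝ => (1 / T) •
          ∫ t in (0 : ℝ)..T, Complex.exp (-(Complex.I * 2 * Real.pi * ω j * t)) • u t)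
        atTop (𝓝 U))
    (θ' : Fin n → ℝ) (hθ' : ∀ θ : Fin n → ℝ, h (θ + θ') = h θ) :
    ∀ j : Fin n, ∃ m : ℤ, θ' j = (m : ℝ) := by
  intro j
  obtain ⟨H, hH⟩ := exists_continuousMap_comp_coe_eq hcont hper
  have hu_line (t : ℝ) : u t = H (line ω t) := by rw [hu, ← hH]; rfl
  obtain ⟨U, hU0, hUlim⟩ := hfourier j
  obtain ⟨ℓ, -, hℓU⟩ := exists_dual_vector ℂ U (norm_ne_zero_iff.2 hU0)
  let f : C(UnitAddTorus (Fin n), ℂ) := mFourier (-Pi.single j 1) * (ℓ : C(E, ℂ)).comp H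
  have hcoeff : ∫ x, f x = ℓ U := by
    refine tendsto_nhds_unique (tendsto_lineAverage hind f)
      ((ℓ.tendsto_average_comp (by simp_rw [hu_line]; fun_prop) hUlim).congr fun T => ?_)
    simp [lineAverage_apply, f, hu_line, mFourier_neg_single_line]
  have hcoeff_ne : ∫ x, f x ≠ 0 := by
    rw [hcoeff, hℓU]
    exact ofReal_ne_zero.2 (norm_ne_zero_iff.2 hU0)
  exact exists_int_eq_of_mFourier_neg_single_eq_one
    (mFourier_eq_one_of_integral_mul_ne_zero
      (fun x => congrArg ℓ (apply_coe_add_eq hH hθ' x)) hcoeff_ne)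
end
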